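/- arXiv:2602.04548 — 2 statements merged into one kernel-verified Lean document; each statement's English description precedes it below -/
import Mathlib

section
/- Let Ψ(x,y,z) = ((z e^{−8x}/2) ∂_1 h(z(1−e^{−4x}), y) − e^{−4x} h(z(1−e^{−4x}), y)), where h(z,y) = (1 − z(y+1) − √(1 − 2z(y+1) + z²(y−1)²)) / (2z²). Then the function f(x,z) = (2(z−1)e^{4x} − z) / (2(z − (z−1)e^{4x})²) satisfies the first-order PDE ∂_x f + 4z(1−z) ∂_z f = 4(z−1) f with initial condition f(0,z) = z/2 − 1. -/
/-- Generating function of the Narayana numbers. -/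
noncomputable def narayanaGF (z y : ℝ) : ℝ :=
  (1 - z * (y + 1) - Real.sqrt (1 - 2 * z * (y + 1) + z ^ 2 * (y - 1) ^ 2)) / (2 * z ^ 2)

/-- The function `Ψ` from the SYM ν=2 solution (context for Statement 4). -/
noncomputable def PsiSym (x y z : ℝ) : ℝ :=
  z * Real.exp (-8 * x) / 2 *
      deriv (fun w => narayanaGF w y) (z * (1 - Real.exp (-4 * x))) -
    Real.exp (-4 * x) * narayanaGF (z * (1 - Real.exp (-4 * x))) y

/-- The reduced generating function `f` of the SYM ν=2 model. -/
noncomputable def fSym (x z : ℝ) : ℝ :=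
  (2 * (z - 1) * Real.exp (4 * x) - z) / (2 * (z - (z - 1) * Real.exp (4 * x)) ^ 2)

/-! With `w = z - (z - 1) e^{4x}` one has `f = (z - 2w) / (2w²)`, which is homogeneous of degree
`-1` in `(z, w)`. The transport operator `∂ₓ + 4z(1 - z)∂_z` multiplies both `z` and `w` by
`4(1 - z)`, so by homogeneity it multiplies `f` by `-4(1 - z) = 4(z - 1)`. -/

open Real

noncomputable def fSymDenom (x z : ℝ) : ℝ :=
  z - (z - 1) * exp (4 * x)

lemma fSym_eq_div (x z : ℝ) :
    fSym x z = (z - 2 * fSymDenom x z) / (2 * fSymDenom x z ^ 2) := by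
  unfold fSym fSymDenom
  ring

lemma hasDerivAt_fSymDenom_fst (x z : ℝ) :
    HasDerivAt (fun x' => fSymDenom x' z) (-4 * (z - 1) * exp (4 * x)) x := by
  have hexp : HasDerivAt (fun x' => exp (4 * x')) (exp (4 * x) * 4) x := by
    simpa using ((hasDerivAt_id x).const_mul 4).exp
  unfold fSymDenom
  exact ((hexp.const_mul (z - 1)).const_sub z).congr_deriv (by ring)

lemma hasDerivAt_fSymDenom_snd (x z : ℝ) :
    HasDerivAt (fun z' => fSymDenom x z') (1 - exp (4 * x)) z := by
  unfold fSymDenom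
  exact ((hasDerivAt_id' z).sub (((hasDerivAt_id' z).sub_const 1).mul_const _)).congr_deriv (by ring)

lemma fSymDenom_transport (x z : ℝ) :
    -4 * (z - 1) * exp (4 * x) + 4 * z * (1 - z) * (1 - exp (4 * x)) =
      4 * (1 - z) * fSymDenom x z := by
  unfold fSymDenom
  ring

theorem HasDerivAt.sub_two_mul_div_two_mul_sq {u w : ℝ → ℝ} {u' w' t : ℝ}
    (hu : HasDerivAt u u' t) (hw : HasDerivAt w w' t) (hw0 : w t ≠ 0) :
    HasDerivAt (fun s => (u s - 2 * w s) / (2 * w s ^ 2))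
      ((u' * w t - 2 * (u t - w t) * w') / (2 * w t ^ 3)) t := by
  refine ((hu.fun_sub (hw.const_mul 2)).fun_div ((hw.fun_pow 2).const_mul 2)
    (mul_ne_zero two_ne_zero (pow_ne_zero 2 hw0))).congr_deriv ?_
  field_simp
  ring

lemma transport_sub_two_mul_div_two_mul_sq {a c u w u₁ u₂ w₁ w₂ : ℝ} (hw0 : w ≠ 0)
    (hu : u₁ + c * u₂ = a * u) (hw' : w₁ + c * w₂ = a * w) :
    (u₁ * w - 2 * (u - w) * w₁) / (2 * w ^ 3) + c * ((u₂ * w - 2 * (u - w) * w₂) / (2 * w ^ 3)) =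
      -a * ((u - 2 * w) / (2 * w ^ 2)) := by
  calc _ = ((u₁ + c * u₂) * w - 2 * (u - w) * (w₁ + c * w₂)) / (2 * w ^ 3) := by ring
    _ = _ := by
      rw [hu, hw']
      field_simp
      ring

/-- `f(x,z) = (2(z−1)e^{4x} − z)/(2(z−(z−1)e^{4x})²)` satisfies the
first-order PDE `∂_x f + 4z(1−z) ∂_z f = 4(z−1) f` with `f(0,z) = z/2 − 1`. -/
theorem fSym_solves_PDE :
    (∀ x z : ℝ, z - (z - 1) * Real.exp (4 * x) ≠ 0 →
      deriv (fun x' => fSym x' z) x + 4 * z * (1 - z) * deriv (fun z' => fSym x z') z =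
        4 * (z - 1) * fSym x z) ∧
    (∀ z : ℝ, fSym 0 z = z / 2 - 1) := by
  refine ⟨fun x z hD => ?_, fun z => ?_⟩
  · replace hD : fSymDenom x z ≠ 0 := hD
    simp only [fSym_eq_div]
    rw [((hasDerivAt_const x z).sub_two_mul_div_two_mul_sq (hasDerivAt_fSymDenom_fst x z) hD).deriv,
      ((hasDerivAt_id' z).sub_two_mul_div_two_mul_sq (hasDerivAt_fSymDenom_snd x z) hD).deriv]
    linear_combination transport_sub_two_mul_div_two_mul_sq (a := 4 * (1 - z)) (u := z)
      (u₁ := 0) (u₂ := 1) hD (by ring) (fSymDenom_transport x z)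
  · simp only [fSym, mul_zero, exp_zero]
    ring
end

section
/- The number of non-crossing partitions of a set of m cyclically ordered points into exactly n blocks equals the Narayana number N_{m,n} = (1/m) C(m,n) C(m,n−1). -/
/-!
Remove from a noncrossing partition the block that closes first, i.e. the one with the smallest
maximum `t`. Noncrossingness forces it to be an interval `[a, t]` of the points, and what remains
is a noncrossing partition of the other points all of whose blocks close after `t`. In terms of
the number of remaining points and the number of points above `t`, the partitions into `n` blocks
obey the same recursion as pairs `(S, T)` of `n`-sets with the ballot property (every initial
segment contains at least as many elements of `T` as of `S`) under removal of both maxima. For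
`m` points this leaves the ballot pairs of `(n-1)`-subsets of an `(m-1)`-set. Swapping the
suffixes of `S` and `T` from the first violation of the ballot property on is an involution that
matches the other pairs of `(n-1)`-sets with all pairs of an `n`-set and an `(n-2)`-set, so there
are `C(m-1,n-1)^2 - C(m-1,n) C(m-1,n-2) = C(m,n) C(m,n-1) / m` ballot pairs.
-/

/-- `A` is a partition of `Fin m` into nonempty pairwise disjoint blocks. -/
def IsPartitionOfFin (m : ℕ) (A : Finset (Finset (Fin m))) : Prop :=
  (∀ s ∈ A, s.Nonempty) ∧
  (∀ s ∈ A, ∀ t ∈ A, s ≠ t → Disjoint s t) ∧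
  (∀ x : Fin m, ∃ s ∈ A, x ∈ s)

/-- `A` is non-crossing: there are no `a < b < c < d` with `a, c` in one block and
`b, d` in a different block. -/
def IsNoncrossing (m : ℕ) (A : Finset (Finset (Fin m))) : Prop :=
  ∀ a b c d : Fin m, a < b → b < c → c < d →
    ∀ s ∈ A, ∀ t ∈ A, a ∈ s → c ∈ s → b ∈ t → d ∈ t → s = t

open Finset

namespace Finset

variable {α : Type*} [LinearOrder α]

def numBelow (s : Finset α) (x : α) : ℕ := #{y ∈ s | y < x}

def numAbove (s : Finset α) (x : α) : ℕ := #{y ∈ s | x < y}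

theorem numBelow_le_card (s : Finset α) (x : α) : s.numBelow x ≤ #s := card_filter_le _ _

theorem numBelow_eq_card {s : Finset α} {x : α} (h : ∀ y ∈ s, y < x) : s.numBelow x = #s := by
  rw [numBelow, filter_true_of_mem h]

theorem numBelow_insert {s : Finset α} {a : α} (ha : a ∉ s) (x : α) :
    (insert a s).numBelow x = s.numBelow x + if a < x then 1 else 0 := by
  unfold numBelow
  rw [filter_insert]
  split_ifs
  · exact card_insert_of_notMem fun h => ha (mem_filter.1 h).1
  · rfl

theorem numBelow_mono (s : Finset α) {x y : α} (h : x ≤ y) : s.numBelow x ≤ s.numBelow y :=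
  card_le_card (monotone_filter_right s fun _ _ hz => hz.trans_le h)

theorem numAbove_anti (s : Finset α) {x y : α} (h : x ≤ y) : s.numAbove y ≤ s.numAbove x :=
  card_le_card (monotone_filter_right s fun _ _ hz => h.trans_lt hz)

theorem numBelow_lt_numBelow {s : Finset α} {x y : α} (hx : x ∈ s) (h : x < y) :
    s.numBelow x < s.numBelow y :=
  card_lt_card <| (ssubset_iff_of_subset (monotone_filter_right s fun _ _ hz => hz.trans h)).2
    ⟨x, mem_filter.2 ⟨hx, h⟩, fun hx' => lt_irrefl x (mem_filter.1 hx').2⟩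

theorem numAbove_lt_numAbove {s : Finset α} {x y : α} (hy : y ∈ s) (h : x < y) :
    s.numAbove y < s.numAbove x :=
  card_lt_card <| (ssubset_iff_of_subset (monotone_filter_right s fun _ _ hz => h.trans hz)).2
    ⟨y, mem_filter.2 ⟨hy, h⟩, fun hy' => lt_irrefl y (mem_filter.1 hy').2⟩

theorem numBelow_add_numAbove {s : Finset α} {x : α} (hx : x ∈ s) :
    s.numBelow x + s.numAbove x + 1 = #s := by
  have hsplit : s = insert x ({y ∈ s | y < x} ∪ {y ∈ s | x < y}) := by
    ext y
    simp only [mem_insert, mem_union, mem_filter]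
    constructor
    · intro hy
      rcases lt_trichotomy y x with h | h | h <;> tauto
    · rintro (rfl | ⟨hy, _⟩ | ⟨hy, _⟩) <;> assumption
  conv_rhs => rw [hsplit]
  rw [card_insert_of_notMem (by simp), card_union_of_disjoint
    (disjoint_filter.2 fun _ _ h₁ h₂ => lt_asymm h₁ h₂)]
  rfl

theorem injOn_numBelow (s : Finset α) : Set.InjOn s.numBelow s := by
  intro x hx y hy h
  by_contra hne
  rcases lt_or_gt_of_ne hne with hlt | hlt
  · exact (numBelow_lt_numBelow hx hlt).ne h
  · exact (numBelow_lt_numBelow hy hlt).ne' h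

theorem injOn_numAbove (s : Finset α) : Set.InjOn s.numAbove s := by
  intro x hx y hy h
  by_contra hne
  rcases lt_or_gt_of_ne hne with hlt | hlt
  · exact (numAbove_lt_numAbove hy hlt).ne' h
  · exact (numAbove_lt_numAbove hx hlt).ne h

theorem exists_numBelow_eq {s : Finset α} {k : ℕ} (hk : k < #s) :
    ∃ x ∈ s, s.numBelow x = k := by
  obtain ⟨x, hx, hxk⟩ := surj_on_of_inj_on_of_card_le (s := s) (t := range #s)
    (fun x _ => s.numBelow x)
    (fun x hx => mem_range.2 (by have := numBelow_add_numAbove hx; omega))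
    (fun x y hx hy h => injOn_numBelow s hx hy h) (by simp) k (mem_range.2 hk)
  exact ⟨x, hx, hxk.symm⟩

theorem filter_lt_union_filter_le (s : Finset α) (x : α) :
    {y ∈ s | y < x} ∪ {y ∈ s | x ≤ y} = s := by
  rw [← filter_or]
  exact filter_true_of_mem fun y _ => lt_or_ge y x

theorem filter_lt_of_union {s t : Finset α} {x z : α} (hz : z ≤ x) :
    {y ∈ {y ∈ s | y < x} ∪ {y ∈ t | x ≤ y} | y < z} = {y ∈ s | y < z} := by
  ext y
  simp only [mem_filter, mem_union]
  constructor
  · rintro ⟨⟨hy, -⟩ | ⟨-, hy⟩, hyz⟩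
    · exact ⟨hy, hyz⟩
    · exact absurd (hy.trans_lt hyz) hz.not_gt
  · rintro ⟨hy, hyz⟩
    exact ⟨Or.inl ⟨hy, hyz.trans_le hz⟩, hyz⟩

theorem filter_le_of_union (s t : Finset α) (x : α) :
    {y ∈ {y ∈ s | y < x} ∪ {y ∈ t | x ≤ y} | x ≤ y} = {y ∈ t | x ≤ y} := by
  ext y
  simp only [mem_filter, mem_union]
  constructor
  · rintro ⟨⟨-, hy⟩ | hy, hxy⟩
    · exact absurd hy hxy.not_gt
    · exact hy
  · exact fun hy => ⟨Or.inr hy, hy.2⟩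

theorem numBelow_zero (s : Finset ℕ) : s.numBelow 0 = 0 := by simp [numBelow]

theorem numBelow_succ (s : Finset ℕ) (x : ℕ) :
    s.numBelow (x + 1) = s.numBelow x + if x ∈ s then 1 else 0 := by
  have h : {y ∈ s | y < x + 1} = {y ∈ s | y < x} ∪ {y ∈ s | y = x} := by
    ext y
    simp only [mem_filter, mem_union, ← and_or_left, Nat.lt_succ_iff_lt_or_eq]
  rw [numBelow, h, card_union_of_disjoint (disjoint_filter.2 fun _ _ h₁ h₂ => h₁.ne h₂),
    filter_eq']
  split_ifs <;> simp [numBelow]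

end Finset

def Ballot (S T : Finset ℕ) : Prop := ∀ x, S.numBelow x ≤ T.numBelow x

theorem not_ballot_iff {S T : Finset ℕ} :
    ¬ Ballot S T ↔ ∃ x, T.numBelow x < S.numBelow x := by
  simp [Ballot]

theorem not_ballot_of_card_lt {S T : Finset ℕ} (h : #T < #S) : ¬ Ballot S T := by
  obtain ⟨x, hx⟩ := exists_nat_subset_range (S ∪ T)
  have hbelow : ∀ U ⊆ S ∪ T, U.numBelow x = #U := fun U hU =>
    numBelow_eq_card fun y hy => mem_range.1 (hx (hU hy))
  intro hST
  have := hST x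
  rw [hbelow S subset_union_left, hbelow T subset_union_right] at this
  omega

theorem Ballot.zero_mem {S T : Finset ℕ} (h : Ballot S T) (hS : 0 ∈ S) : 0 ∈ T := by
  obtain ⟨y, hy⟩ := card_pos.1 <|
    (card_pos.2 ⟨0, mem_filter.2 ⟨hS, zero_lt_one⟩⟩).trans_le (h 1)
  obtain ⟨hyT, hy1⟩ := mem_filter.1 hy
  rwa [Nat.lt_one_iff.1 hy1] at hyT

theorem ballot_insert_zero_iff {S T : Finset ℕ} (hS : 0 ∉ S) (hT : 0 ∉ T) :
    Ballot (insert 0 S) (insert 0 T) ↔ Ballot S T := by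
  refine forall_congr' fun x => ?_
  rw [numBelow_insert hS, numBelow_insert hT]
  split_ifs <;> omega

theorem ballot_insert_insert_iff {S T : Finset ℕ} {i j : ℕ} (hS : ∀ y ∈ S, y < i)
    (hT : ∀ y ∈ T, y < j) (hji : j ≤ i) (hcard : #S = #T) :
    Ballot (insert i S) (insert j T) ↔ Ballot S T := by
  refine forall_congr' fun x => ?_
  rw [numBelow_insert fun h => lt_irrefl i (hS i h), numBelow_insert fun h => lt_irrefl j (hT j h)]
  by_cases hx : x ≤ j
  · simp only [if_neg (show ¬ i < x by omega), if_neg (show ¬ j < x by omega), add_zero]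
  · have hTx : T.numBelow x = #T := numBelow_eq_card fun y hy => (hT y hy).trans (by omega)
    have hSx := numBelow_le_card S x
    split_ifs <;> omega

namespace Ballot

def suffixSwap (x : ℕ) (p : Finset ℕ × Finset ℕ) : Finset ℕ × Finset ℕ :=
  ({y ∈ p.1 | y < x} ∪ {y ∈ p.2 | x ≤ y}, {y ∈ p.2 | y < x} ∪ {y ∈ p.1 | x ≤ y})

theorem numBelow_suffixSwap_fst {x z : ℕ} (p : Finset ℕ × Finset ℕ) (hz : z ≤ x) :
    (suffixSwap x p).1.numBelow z = p.1.numBelow z := by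
  rw [suffixSwap, numBelow, filter_lt_of_union hz, numBelow]

theorem numBelow_suffixSwap_snd {x z : ℕ} (p : Finset ℕ × Finset ℕ) (hz : z ≤ x) :
    (suffixSwap x p).2.numBelow z = p.2.numBelow z :=
  numBelow_suffixSwap_fst p.swap hz

theorem card_suffixSwap_fst (x : ℕ) (p : Finset ℕ × Finset ℕ) :
    #(suffixSwap x p).1 + p.2.numBelow x = p.1.numBelow x + #p.2 := by
  have hdisj : ∀ s t : Finset ℕ, Disjoint {y ∈ s | y < x} {y ∈ t | x ≤ y} := fun s t =>
    disjoint_left.2 fun y h₁ h₂ => by rw [mem_filter] at h₁ h₂; omega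
  have h := card_union_of_disjoint (hdisj p.2 p.2)
  rw [filter_lt_union_filter_le] at h
  rw [suffixSwap, card_union_of_disjoint (hdisj _ _), numBelow, numBelow, h]
  ring

theorem card_suffixSwap_snd (x : ℕ) (p : Finset ℕ × Finset ℕ) :
    #(suffixSwap x p).2 + p.1.numBelow x = p.2.numBelow x + #p.1 :=
  card_suffixSwap_fst x p.swap

theorem suffixSwap_suffixSwap (x : ℕ) (p : Finset ℕ × Finset ℕ) :
    suffixSwap x (suffixSwap x p) = p := by
  simp only [suffixSwap, filter_lt_of_union le_rfl, filter_le_of_union, filter_lt_union_filter_le]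

theorem suffixSwap_subset {G : Finset ℕ} {p : Finset ℕ × Finset ℕ} (h₁ : p.1 ⊆ G)
    (h₂ : p.2 ⊆ G) (x : ℕ) : (suffixSwap x p).1 ⊆ G ∧ (suffixSwap x p).2 ⊆ G :=
  ⟨union_subset ((filter_subset _ _).trans h₁) ((filter_subset _ _).trans h₂),
    union_subset ((filter_subset _ _).trans h₂) ((filter_subset _ _).trans h₁)⟩

theorem numBelow_find_violation {S T : Finset ℕ} (h : ∃ x, T.numBelow x < S.numBelow x) :
    S.numBelow (Nat.find h) = T.numBelow (Nat.find h) + 1 := by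
  have hviol := Nat.find_spec h
  have hpos : Nat.find h ≠ 0 := fun h0 => by
    rw [h0, numBelow_zero, numBelow_zero] at hviol
    exact lt_irrefl 0 hviol
  obtain ⟨y, hy⟩ := Nat.exists_eq_succ_of_ne_zero hpos
  have hprev := not_lt.1 (Nat.find_min h (hy ▸ Nat.lt_succ_self y))
  rw [hy] at hviol ⊢
  rw [numBelow_succ, numBelow_succ] at hviol ⊢
  split_ifs at hviol ⊢ <;> omega

open Classical in
noncomputable def reflect (p : Finset ℕ × Finset ℕ) : Finset ℕ × Finset ℕ :=
  if h : ∃ x, p.2.numBelow x < p.1.numBelow x then suffixSwap (Nat.find h) p else p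

theorem reflect_of_violation {p : Finset ℕ × Finset ℕ}
    (h : ∃ x, p.2.numBelow x < p.1.numBelow x) :
    reflect p = suffixSwap (Nat.find h) p := dif_pos h

/-- Swapping suffixes leaves all counts below the swap point unchanged, so the first violation
survives the swap. -/
theorem reflect_reflect (p : Finset ℕ × Finset ℕ) : reflect (reflect p) = p := by
  by_cases h : ∃ x, p.2.numBelow x < p.1.numBelow x
  · have h' : ∃ x, (reflect p).2.numBelow x < (reflect p).1.numBelow x := by
      refine ⟨Nat.find h, ?_⟩
      rw [reflect_of_violation h, numBelow_suffixSwap_fst _ le_rfl,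
        numBelow_suffixSwap_snd _ le_rfl]
      exact Nat.find_spec h
    have hfind : Nat.find h' = Nat.find h := by
      refine (Nat.find_eq_iff h').2 ⟨?_, fun z hz => ?_⟩
      · rw [reflect_of_violation h, numBelow_suffixSwap_fst _ le_rfl,
          numBelow_suffixSwap_snd _ le_rfl]
        exact Nat.find_spec h
      · rw [reflect_of_violation h, numBelow_suffixSwap_fst _ hz.le,
          numBelow_suffixSwap_snd _ hz.le]
        exact Nat.find_min h hz
    rw [reflect_of_violation h', hfind, reflect_of_violation h, suffixSwap_suffixSwap]
  · have hp : reflect p = p := dif_neg h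
    rw [hp, hp]

theorem card_reflect {p : Finset ℕ × Finset ℕ} (h : ¬ Ballot p.1 p.2) :
    #(reflect p).1 = #p.2 + 1 ∧ #(reflect p).2 + 1 = #p.1 := by
  have hv := not_ballot_iff.1 h
  have h₁ := card_suffixSwap_fst (Nat.find hv) p
  have h₂ := card_suffixSwap_snd (Nat.find hv) p
  have h₃ := numBelow_find_violation hv
  rw [reflect_of_violation hv]
  omega

theorem not_reflect {p : Finset ℕ × Finset ℕ} (h : ¬ Ballot p.1 p.2) :
    ¬ Ballot (reflect p).1 (reflect p).2 := by
  have hv := not_ballot_iff.1 h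
  rw [reflect_of_violation hv, not_ballot_iff]
  refine ⟨Nat.find hv, ?_⟩
  rw [numBelow_suffixSwap_fst _ le_rfl, numBelow_suffixSwap_snd _ le_rfl]
  exact Nat.find_spec hv

theorem reflect_subset {G : Finset ℕ} {p : Finset ℕ × Finset ℕ} (h₁ : p.1 ⊆ G)
    (h₂ : p.2 ⊆ G) :
    (reflect p).1 ⊆ G ∧ (reflect p).2 ⊆ G := by
  unfold reflect
  split_ifs
  · exact suffixSwap_subset h₁ h₂ _
  · exact ⟨h₁, h₂⟩

end Ballot

open Classical in
noncomputable def ballotPairs (G : Finset ℕ) (a : ℕ) : Finset (Finset ℕ × Finset ℕ) :=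
  {p ∈ G.powersetCard a ×ˢ G.powersetCard a | Ballot p.1 p.2}

theorem mem_ballotPairs {G : Finset ℕ} {a : ℕ} {p : Finset ℕ × Finset ℕ} :
    p ∈ ballotPairs G a ↔
      (p.1 ⊆ G ∧ #p.1 = a) ∧ (p.2 ⊆ G ∧ #p.2 = a) ∧ Ballot p.1 p.2 := by
  classical
  rw [ballotPairs, mem_filter, mem_product, mem_powersetCard, mem_powersetCard, and_assoc]

theorem card_ballotPairs_add_choose_mul (G : Finset ℕ) {a : ℕ} (ha : 1 ≤ a) :
    #(ballotPairs G a) + (#G).choose (a + 1) * (#G).choose (a - 1) = (#G).choose a ^ 2 := by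
  classical
  have hbad : #{p ∈ G.powersetCard a ×ˢ G.powersetCard a | ¬ Ballot p.1 p.2} =
      #(G.powersetCard (a + 1) ×ˢ G.powersetCard (a - 1)) := by
    refine card_nbij' Ballot.reflect Ballot.reflect (fun p hp => ?_) (fun q hq => ?_)
      (fun p _ => Ballot.reflect_reflect p) (fun q _ => Ballot.reflect_reflect q)
    · rw [mem_coe, mem_filter, mem_product, mem_powersetCard, mem_powersetCard] at hp
      obtain ⟨⟨⟨h₁, c₁⟩, h₂, c₂⟩, hp⟩ := hp
      obtain ⟨e₁, e₂⟩ := Ballot.card_reflect hp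
      obtain ⟨s₁, s₂⟩ := Ballot.reflect_subset h₁ h₂
      rw [mem_coe, mem_product, mem_powersetCard, mem_powersetCard]
      exact ⟨⟨s₁, by omega⟩, s₂, by omega⟩
    · rw [mem_coe, mem_product, mem_powersetCard, mem_powersetCard] at hq
      obtain ⟨⟨h₁, c₁⟩, h₂, c₂⟩ := hq
      have hq : ¬ Ballot q.1 q.2 := not_ballot_of_card_lt (by omega)
      obtain ⟨e₁, e₂⟩ := Ballot.card_reflect hq
      obtain ⟨s₁, s₂⟩ := Ballot.reflect_subset h₁ h₂
      rw [mem_coe, mem_filter, mem_product, mem_powersetCard, mem_powersetCard]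
      exact ⟨⟨⟨s₁, by omega⟩, s₂, by omega⟩, Ballot.not_reflect hq⟩
  have h := card_filter_add_card_filter_not (s := G.powersetCard a ×ˢ G.powersetCard a)
    (fun p => Ballot p.1 p.2)
  rwa [hbad, card_product, card_product, card_powersetCard, card_powersetCard, card_powersetCard,
    ← sq] at h

theorem Nat.succ_mul_choose_sq (g b : ℕ) :
    (g + 1) * g.choose (b + 1) ^ 2 =
      (g + 1) * (g.choose (b + 2) * g.choose b) +
        (g + 1).choose (b + 2) * (g + 1).choose (b + 1) := by
  rcases le_or_gt g b with hgb | hbg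
  · simp [Nat.choose_eq_zero_of_lt (by omega : g < b + 1),
      Nat.choose_eq_zero_of_lt (by omega : g < b + 2),
      Nat.choose_eq_zero_of_lt (by omega : g + 1 < b + 2)]
  obtain ⟨d, rfl⟩ : ∃ d, g = b + 1 + d := ⟨g - (b + 1), by omega⟩
  have h₁ := Nat.choose_succ_right_eq (b + 1 + d) b
  have h₂ := Nat.choose_succ_right_eq (b + 1 + d) (b + 1)
  rw [show b + 1 + d - b = d + 1 by omega] at h₁
  rw [show b + 1 + d - (b + 1) = d by omega] at h₂
  rw [Nat.choose_succ_succ', Nat.choose_succ_succ']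
  -- `h₁` and `h₂` express `C(g, b)` and `C(g, b + 2)` through `C(g, b + 1)` up to these factors
  apply Nat.eq_of_mul_eq_mul_left (show 0 < (d + 1) * (b + 2) by positivity)
  set X := (b + 1 + d).choose b
  set Y := (b + 1 + d).choose (b + 1)
  set Z := (b + 1 + d).choose (b + 1 + 1)
  zify at h₁ h₂ ⊢
  linear_combination ((b + 1 + d + 2 : ℤ) * Y * d + Y * (b + 2)) * h₁ +
    (-(b + 1 + d + 2 : ℤ) * X * (d + 1) - Y * (d + 1)) * h₂

theorem succ_mul_card_ballotPairs (G : Finset ℕ) (a : ℕ) :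
    (#G + 1) * #(ballotPairs G a) = (#G + 1).choose (a + 1) * (#G + 1).choose a := by
  rcases a with _ | b
  · have : ballotPairs G 0 = {(∅, ∅)} := by
      ext p
      simp only [mem_ballotPairs, card_eq_zero, mem_singleton]
      constructor
      · rintro ⟨⟨-, h₁⟩, ⟨-, h₂⟩, -⟩
        exact Prod.ext h₁ h₂
      · rintro rfl
        exact ⟨⟨empty_subset G, rfl⟩, ⟨empty_subset G, rfl⟩, fun x => le_rfl⟩
    simp [this]
  · have h := card_ballotPairs_add_choose_mul G (a := b + 1) (by omega)
    have hid := Nat.succ_mul_choose_sq #G b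
    rw [Nat.add_sub_cancel] at h
    rw [← h] at hid
    nlinarith [hid]

theorem insert_eq_insert_of_forall_lt {α : Type*} [LinearOrder α] {s t : Finset α} {a b : α}
    (hs : ∀ y ∈ s, y < a) (ht : ∀ y ∈ t, y < b) (h : insert a s = insert b t) :
    a = b ∧ s = t := by
  have hab : a = b := by
    rcases mem_insert.1 (h ▸ mem_insert_self a s) with hab | hat
    · exact hab
    rcases mem_insert.1 (h ▸ mem_insert_self b t) with hba | hbs
    · exact hba.symm
    exact absurd (ht a hat) (hs b hbs).not_gt
  subst hab
  refine ⟨rfl, ?_⟩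
  rw [← erase_insert fun h => lt_irrefl a (hs a h), h, erase_insert fun h => lt_irrefl a (ht a h)]

/-- Codes of noncrossing partitions of a `u`-element set into `n` blocks, all closing among
its `c` largest elements. A block `B` contributes to `p.1` the number of points in blocks closing
after `B`, and to `p.2` the number of points above the maximum of `B`; the last block to close
contributes `0` to both. -/
noncomputable def ncCodes (u c n : ℕ) : Finset (Finset ℕ × Finset ℕ) :=
  open Classical in
  {p ∈ (range u).powerset ×ˢ (range c).powerset |
    #p.1 = n ∧ #p.2 = n ∧ Ballot p.1 p.2 ∧ (u ≠ 0 → 0 ∈ p.1)}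

theorem mem_ncCodes {u c n : ℕ} {p : Finset ℕ × Finset ℕ} :
    p ∈ ncCodes u c n ↔ p.1 ⊆ range u ∧ p.2 ⊆ range c ∧ #p.1 = n ∧ #p.2 = n ∧
      Ballot p.1 p.2 ∧ (u ≠ 0 → 0 ∈ p.1) := by
  classical
  simp only [ncCodes, mem_filter, mem_product, mem_powerset, and_assoc]

theorem card_ncCodes_zero (u c : ℕ) : #(ncCodes u c 0) = if u = 0 then 1 else 0 := by
  have : ncCodes u c 0 = if u = 0 then {(∅, ∅)} else ∅ := by
    ext p
    simp only [mem_ncCodes, card_eq_zero]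
    split_ifs with hu
    · simp only [hu, mem_singleton]
      constructor
      · rintro ⟨-, -, h₁, h₂, -⟩
        exact Prod.ext h₁ h₂
      · rintro rfl
        simp [Ballot]
    · simp only [notMem_empty, iff_false]
      rintro ⟨-, -, h₁, -, -, h⟩
      simp only [h₁, notMem_empty, imp_false, not_not] at h
      exact hu h
  rw [this]
  split_ifs <;> rfl

def topPairs (u c : ℕ) : Finset (ℕ × ℕ) := {q ∈ range u ×ˢ range c | q.2 ≤ q.1}

theorem mem_topPairs {u c : ℕ} {q : ℕ × ℕ} :
    q ∈ topPairs u c ↔ q.1 < u ∧ q.2 < c ∧ q.2 ≤ q.1 := by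
  simp only [topPairs, mem_filter, mem_product, mem_range, and_assoc]

theorem insert_mem_ncCodes {u c n : ℕ} {q : ℕ × ℕ} (hq : q ∈ topPairs u c)
    {p : Finset ℕ × Finset ℕ} (hp : p ∈ ncCodes q.1 q.2 n) :
    (insert q.1 p.1, insert q.2 p.2) ∈ ncCodes u c (n + 1) := by
  obtain ⟨hi, hj, hji⟩ := mem_topPairs.1 hq
  obtain ⟨hS, hT, cS, cT, hb, h0⟩ := mem_ncCodes.1 hp
  have hS' : ∀ y ∈ p.1, y < q.1 := fun y hy => mem_range.1 (hS hy)
  have hT' : ∀ y ∈ p.2, y < q.2 := fun y hy => mem_range.1 (hT hy)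
  refine mem_ncCodes.2 ⟨insert_subset (mem_range.2 hi) (hS.trans (range_subset_range.2 hi.le)),
    insert_subset (mem_range.2 hj) (hT.trans (range_subset_range.2 hj.le)), ?_, ?_,
    (ballot_insert_insert_iff hS' hT' hji (cS.trans cT.symm)).2 hb, fun _ => ?_⟩
  · rw [card_insert_of_notMem (fun h => lt_irrefl _ (hS' _ h)), cS]
  · rw [card_insert_of_notMem (fun h => lt_irrefl _ (hT' _ h)), cT]
  · rcases Nat.eq_zero_or_pos q.1 with h | h
    · exact h ▸ mem_insert_self _ _
    · exact mem_insert_of_mem (h0 h.ne')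

theorem exists_eq_insert_of_mem_ncCodes {u c n : ℕ} {p : Finset ℕ × Finset ℕ}
    (hp : p ∈ ncCodes u c (n + 1)) :
    ∃ q ∈ topPairs u c, ∃ p' ∈ ncCodes q.1 q.2 n,
      (insert q.1 p'.1, insert q.2 p'.2) = p := by
  obtain ⟨hS, hT, cS, cT, hb, h0⟩ := mem_ncCodes.1 hp
  have hSne : p.1.Nonempty := card_pos.1 (by omega)
  have hTne : p.2.Nonempty := card_pos.1 (by omega)
  set i := p.1.max' hSne
  set j := p.2.max' hTne
  have hS' : ∀ y ∈ p.1.erase i, y < i := fun y hy => lt_max'_of_mem_erase_max' _ hSne hy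
  have hT' : ∀ y ∈ p.2.erase j, y < j := fun y hy => lt_max'_of_mem_erase_max' _ hTne hy
  have hSi : insert i (p.1.erase i) = p.1 := insert_erase (max'_mem _ hSne)
  have hTj : insert j (p.2.erase j) = p.2 := insert_erase (max'_mem _ hTne)
  have hiu : i < u := mem_range.1 (hS (max'_mem _ hSne))
  have hji : j ≤ i := by
    have h₁ := hb (i + 1)
    rw [numBelow_eq_card fun y hy => Nat.lt_succ_of_le (le_max' _ y hy)] at h₁
    have h₂ : p.2.numBelow (i + 1) = #p.2 := le_antisymm (numBelow_le_card _ _) (by omega)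
    rw [numBelow, card_filter_eq_iff] at h₂
    exact Nat.le_of_lt_succ (h₂ j (max'_mem _ hTne))
  have hcard : #(p.1.erase i) = n ∧ #(p.2.erase j) = n := by
    rw [card_erase_of_mem (max'_mem _ hSne), card_erase_of_mem (max'_mem _ hTne), cS, cT]
    exact ⟨rfl, rfl⟩
  refine ⟨(i, j), mem_topPairs.2 ⟨hiu, mem_range.1 (hT (max'_mem _ hTne)), hji⟩,
    (p.1.erase i, p.2.erase j), mem_ncCodes.2 ⟨fun y hy => mem_range.2 (hS' y hy),
      fun y hy => mem_range.2 (hT' y hy), hcard.1, hcard.2, ?_, fun hi0 => ?_⟩, ?_⟩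
  · rw [← ballot_insert_insert_iff hS' hT' hji (hcard.1.trans hcard.2.symm), hSi, hTj]
    exact hb
  · exact mem_erase.2 ⟨Ne.symm hi0, h0 (by omega)⟩
  · exact Prod.ext hSi hTj

theorem card_ncCodes_succ (u c n : ℕ) :
    #(ncCodes u c (n + 1)) = ∑ q ∈ topPairs u c, #(ncCodes q.1 q.2 n) := by
  rw [← card_sigma]
  symm
  refine card_bij (fun x _ => (insert x.1.1 x.2.1, insert x.1.2 x.2.2))
    (fun x hx => insert_mem_ncCodes (mem_sigma.1 hx).1 (mem_sigma.1 hx).2) ?_ ?_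
  · rintro ⟨⟨i, j⟩, S, T⟩ hx ⟨⟨i', j'⟩, S', T'⟩ hx' h
    obtain ⟨hS, hT, -⟩ := mem_ncCodes.1 (mem_sigma.1 hx).2
    obtain ⟨hS', hT', -⟩ := mem_ncCodes.1 (mem_sigma.1 hx').2
    simp only [Prod.mk.injEq] at h
    obtain ⟨rfl, rfl⟩ := insert_eq_insert_of_forall_lt (fun y hy => mem_range.1 (hS hy))
      (fun y hy => mem_range.1 (hS' hy)) h.1
    obtain ⟨rfl, rfl⟩ := insert_eq_insert_of_forall_lt (fun y hy => mem_range.1 (hT hy))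
      (fun y hy => mem_range.1 (hT' hy)) h.2
    rfl
  · intro p hp
    obtain ⟨q, hq, p', hp', rfl⟩ := exists_eq_insert_of_mem_ncCodes hp
    exact ⟨⟨q, p'⟩, mem_sigma.2 ⟨hq, hp'⟩, rfl⟩

section SetPartition

variable {α : Type*}

def IsSetPartition (U : Finset α) (A : Finset (Finset α)) : Prop :=
  (∀ B ∈ A, B.Nonempty) ∧ (∀ B ∈ A, ∀ C ∈ A, B ≠ C → Disjoint B C) ∧
    (∀ B ∈ A, B ⊆ U) ∧ ∀ x ∈ U, ∃ B ∈ A, x ∈ B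

theorem isSetPartition_empty_iff {U : Finset α} : IsSetPartition U ∅ ↔ U = ∅ := by
  simp [IsSetPartition, eq_empty_iff_forall_notMem]

variable [DecidableEq α]

theorem IsSetPartition.erase {U B : Finset α} {A : Finset (Finset α)} (h : IsSetPartition U A)
    (hB : B ∈ A) : IsSetPartition (U \ B) (A.erase B) := by
  obtain ⟨hne, hdisj, hsub, hcover⟩ := h
  refine ⟨fun C hC => hne C (mem_of_mem_erase hC),
    fun C hC D hD => hdisj C (mem_of_mem_erase hC) D (mem_of_mem_erase hD),
    fun C hC => subset_sdiff.2 ⟨hsub C (mem_of_mem_erase hC),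
      hdisj C (mem_of_mem_erase hC) B hB (ne_of_mem_erase hC)⟩, fun x hx => ?_⟩
  obtain ⟨hxU, hxB⟩ := mem_sdiff.1 hx
  obtain ⟨C, hC, hxC⟩ := hcover x hxU
  exact ⟨C, mem_erase.2 ⟨fun h => hxB (h ▸ hxC), hC⟩, hxC⟩

theorem IsSetPartition.notMem_of_nonempty {U B : Finset α} {A : Finset (Finset α)}
    (h : IsSetPartition (U \ B) A) (hB : B.Nonempty) : B ∉ A := fun hBA => by
  obtain ⟨x, hx⟩ := hB
  exact (mem_sdiff.1 (h.2.2.1 B hBA hx)).2 hx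

theorem IsSetPartition.insert {U B : Finset α} {A : Finset (Finset α)}
    (h : IsSetPartition (U \ B) A) (hBU : B ⊆ U) (hB : B.Nonempty) :
    IsSetPartition U (insert B A) := by
  obtain ⟨hne, hdisj, hsub, hcover⟩ := h
  have hdisjB : ∀ C ∈ A, Disjoint C B := fun C hC => (subset_sdiff.1 (hsub C hC)).2
  refine ⟨fun C hC => ?_, fun C hC D hD hCD => ?_, fun C hC => ?_, fun x hx => ?_⟩
  · rcases mem_insert.1 hC with rfl | hC
    exacts [hB, hne C hC]
  · rcases mem_insert.1 hC with rfl | hC' <;> rcases mem_insert.1 hD with rfl | hD'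
    · exact absurd rfl hCD
    · exact (hdisjB D hD').symm
    · exact hdisjB C hC'
    · exact hdisj C hC' D hD' hCD
  · rcases mem_insert.1 hC with rfl | hC
    exacts [hBU, (hsub C hC).trans sdiff_subset]
  · by_cases hxB : x ∈ B
    · exact ⟨B, mem_insert_self B A, hxB⟩
    · obtain ⟨C, hC, hxC⟩ := hcover x (mem_sdiff.2 ⟨hx, hxB⟩)
      exact ⟨C, mem_insert_of_mem hC, hxC⟩

end SetPartition

section Noncrossing

variable {α : Type*} [LinearOrder α]

def Noncrossing (A : Finset (Finset α)) : Prop :=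
  ∀ a b c d : α, a < b → b < c → c < d →
    ∀ B ∈ A, ∀ C ∈ A, a ∈ B → c ∈ B → b ∈ C → d ∈ C → B = C

theorem Noncrossing.mono {A A' : Finset (Finset α)} (h : Noncrossing A) (hA' : A' ⊆ A) :
    Noncrossing A' := fun a b c d hab hbc hcd B hB C hC =>
  h a b c d hab hbc hcd B (hA' hB) C (hA' hC)

theorem Noncrossing.insert_of_ordConnected {U I : Finset α} {A : Finset (Finset α)}
    (h : Noncrossing A) (hA : ∀ C ∈ A, C ⊆ U \ I)
    (hI : ∀ x ∈ I, ∀ z ∈ I, ∀ y ∈ U, x ≤ y → y ≤ z → y ∈ I) :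
    Noncrossing (insert I A) := by
  have hout : ∀ C ∈ A, ∀ y ∈ C, y ∈ U ∧ y ∉ I := fun C hC y hy =>
    mem_sdiff.1 (hA C hC hy)
  intro a b c d hab hbc hcd B hB C hC ha hc hb hd
  rcases mem_insert.1 hB with rfl | hB' <;> rcases mem_insert.1 hC with rfl | hC'
  · rfl
  · exact absurd (hI a ha c hc b (hout C hC' b hb).1 hab.le hbc.le) (hout C hC' b hb).2
  · exact absurd (hI b hb d hd c (hout B hB' c hc).1 hbc.le hcd.le) (hout B hB' c hc).2
  · exact h a b c d hab hbc hcd B hB' C hC' ha hc hb hd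

/-- A point strictly inside the block closing first lies in a block closing later, which would
cross it. -/
theorem mem_of_closes_first {U B : Finset α} {A : Finset (Finset α)} {t : α}
    (hA : IsSetPartition U A) (hnc : Noncrossing A) (hB : B ∈ A) (ht : t ∈ B)
    (hfirst : ∀ C ∈ A, ∃ y ∈ C, t ≤ y) {a x : α} (ha : a ∈ B) (hx : x ∈ U)
    (hax : a ≤ x) (hxt : x ≤ t) : x ∈ B := by
  by_contra hxB
  obtain ⟨C, hC, hxC⟩ := hA.2.2.2 x hx
  have hCB : C ≠ B := fun h => hxB (h ▸ hxC)
  obtain ⟨y, hyC, hty⟩ := hfirst C hC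
  have hty : t < y := lt_of_le_of_ne hty fun h =>
    disjoint_left.1 (hA.2.1 B hB C hC hCB.symm) ht (h ▸ hyC)
  have hax : a < x := lt_of_le_of_ne hax fun h => hxB (h ▸ ha)
  have hxt : x < t := lt_of_le_of_ne hxt fun h => hxB (h ▸ ht)
  exact hCB (hnc a x t y hax hxt hty B hB C hC ha ht hxC hyC).symm

theorem IsSetPartition.exists_closes_first {U : Finset α} {A : Finset (Finset α)}
    (hA : IsSetPartition U A) (hnc : Noncrossing A) (hne : A.Nonempty) :
    ∃ B ∈ A, ∃ hB : B.Nonempty, {x ∈ U | B.min' hB ≤ x ∧ x ≤ B.max' hB} = B ∧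
      ∀ C ∈ A, ∃ y ∈ C, B.max' hB ≤ y := by
  obtain ⟨B, hBA, hBmin⟩ := exists_min_image A Finset.max hne
  have hB := hA.1 B hBA
  have hfirst : ∀ C ∈ A, ∃ y ∈ C, B.max' hB ≤ y := fun C hC => by
    refine ⟨C.max' (hA.1 C hC), max'_mem _ _, WithBot.coe_le_coe.1 ?_⟩
    rw [coe_max', coe_max']
    exact hBmin C hC
  refine ⟨B, hBA, hB, ?_, hfirst⟩
  ext x
  rw [mem_filter]
  constructor
  · rintro ⟨hx, hax, hxt⟩
    exact mem_of_closes_first hA hnc hBA (max'_mem B hB) hfirst (min'_mem B hB) hx hax hxt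
  · exact fun hx => ⟨hA.2.2.1 B hBA hx, min'_le B x hx, le_max' B x hx⟩

end Noncrossing

section Counting

variable {α : Type*} [LinearOrder α]

/-- The bound `c` is what the recursion needs: once the block closing first, with maximum `t`, is
removed, taking for `c` the number of points above `t` says that all remaining blocks close
after `t`. -/
noncomputable def ncPartitions (U : Finset α) (c n : ℕ) : Finset (Finset (Finset α)) :=
  open Classical in
  {A ∈ U.powerset.powerset | IsSetPartition U A ∧ Noncrossing A ∧
    (∀ B ∈ A, ∃ x ∈ B, U.numAbove x < c) ∧ #A = n}

theorem mem_ncPartitions {U : Finset α} {c n : ℕ} {A : Finset (Finset α)} :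
    A ∈ ncPartitions U c n ↔ IsSetPartition U A ∧ Noncrossing A ∧
      (∀ B ∈ A, ∃ x ∈ B, U.numAbove x < c) ∧ #A = n := by
  classical
  rw [ncPartitions, mem_filter, mem_powerset, and_iff_right_iff_imp]
  exact fun h B hB => mem_powerset.2 (h.1.2.2.1 B hB)

theorem card_ncPartitions_zero (U : Finset α) (c : ℕ) :
    #(ncPartitions U c 0) = if U = ∅ then 1 else 0 := by
  have : ncPartitions U c 0 = if U = ∅ then {∅} else ∅ := by
    ext A
    simp only [mem_ncPartitions, card_eq_zero]
    split_ifs with hU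
    · subst hU
      rw [mem_singleton]
      constructor
      · exact fun h => h.2.2.2
      · rintro rfl
        exact ⟨isSetPartition_empty_iff.2 rfl,
          fun _ _ _ _ _ _ _ B hB => absurd hB (notMem_empty B),
          fun B hB => absurd hB (notMem_empty B), rfl⟩
    · simp only [notMem_empty, iff_false]
      rintro ⟨hA, -, -, rfl⟩
      exact hU (isSetPartition_empty_iff.1 hA)
  rw [this]
  split_ifs <;> rfl

theorem numAbove_sdiff_lt_iff {U : Finset α} {a t x : α} (hx : x ∈ U) :
    (U \ {y ∈ U | a ≤ y ∧ y ≤ t}).numAbove x < U.numAbove t ↔ t < x := by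
  constructor
  · intro h
    by_contra hxt
    refine h.not_ge (card_le_card fun y hy => ?_)
    obtain ⟨hyU, hty⟩ := mem_filter.1 hy
    exact mem_filter.2 ⟨mem_sdiff.2 ⟨hyU, fun hyI => (mem_filter.1 hyI).2.2.not_gt hty⟩,
      (le_of_not_gt hxt).trans_lt hty⟩
  · intro htx
    refine card_lt_card ((ssubset_iff_of_subset fun y hy => ?_).2 ⟨x, ?_, ?_⟩)
    · obtain ⟨hyU', hxy⟩ := mem_filter.1 hy
      exact mem_filter.2 ⟨(mem_sdiff.1 hyU').1, htx.trans hxy⟩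
    · exact mem_filter.2 ⟨hx, htx⟩
    · exact fun h => lt_irrefl x (mem_filter.1 h).2

/-- The candidates for the least and the largest element of the block closing first. -/
def firstBlockBounds (U : Finset α) (c : ℕ) : Finset (α × α) :=
  {p ∈ U ×ˢ U | p.1 ≤ p.2 ∧ U.numAbove p.2 < c}

theorem mem_firstBlockBounds {U : Finset α} {c : ℕ} {p : α × α} :
    p ∈ firstBlockBounds U c ↔
      p.1 ∈ U ∧ p.2 ∈ U ∧ p.1 ≤ p.2 ∧ U.numAbove p.2 < c := by
  rw [firstBlockBounds, mem_filter, mem_product, and_assoc]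

theorem exists_lt_of_mem_ncPartitions_sdiff {U : Finset α} {a t : α} {n : ℕ}
    {A : Finset (Finset α)}
    (hA : A ∈ ncPartitions (U \ {x ∈ U | a ≤ x ∧ x ≤ t}) (U.numAbove t) n)
    {C : Finset α} (hC : C ∈ A) : ∃ y ∈ C, t < y := by
  obtain ⟨hpart, -, hbound, -⟩ := mem_ncPartitions.1 hA
  obtain ⟨y, hyC, hy⟩ := hbound C hC
  exact ⟨y, hyC, (numAbove_sdiff_lt_iff (mem_sdiff.1 (hpart.2.2.1 C hC hyC)).1).1 hy⟩

theorem insert_mem_ncPartitions {U : Finset α} {c n : ℕ} {p : α × α}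
    (hp : p ∈ firstBlockBounds U c) {A : Finset (Finset α)}
    (hA : A ∈ ncPartitions (U \ {x ∈ U | p.1 ≤ x ∧ x ≤ p.2}) (U.numAbove p.2) n) :
    insert {x ∈ U | p.1 ≤ x ∧ x ≤ p.2} A ∈ ncPartitions U c (n + 1) := by
  obtain ⟨-, ht, hat, htc⟩ := mem_firstBlockBounds.1 hp
  obtain ⟨hpart, hnc, -, hcard⟩ := mem_ncPartitions.1 hA
  have htI : p.2 ∈ {x ∈ U | p.1 ≤ x ∧ x ≤ p.2} := mem_filter.2 ⟨ht, hat, le_rfl⟩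
  refine mem_ncPartitions.2 ⟨hpart.insert (filter_subset _ _) ⟨p.2, htI⟩,
    hnc.insert_of_ordConnected hpart.2.2.1 fun x hx z hz y hy hxy hyz =>
      mem_filter.2 ⟨hy, (mem_filter.1 hx).2.1.trans hxy, hyz.trans (mem_filter.1 hz).2.2⟩,
    fun B hB => ?_, ?_⟩
  · rcases mem_insert.1 hB with rfl | hB
    · exact ⟨p.2, htI, htc⟩
    · obtain ⟨y, hyB, hty⟩ := exists_lt_of_mem_ncPartitions_sdiff hA hB
      exact ⟨y, hyB, (numAbove_anti U hty.le).trans_lt htc⟩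
  · rw [card_insert_of_notMem (hpart.notMem_of_nonempty ⟨p.2, htI⟩), hcard]

/-- Every block of `A` closes after `p.2` and every block of `A'` after `q.2`, so if the two
intervals differed, each would close after the other. -/
theorem insert_inj_of_mem_ncPartitions {U : Finset α} {c n : ℕ} {p q : α × α}
    (hp : p ∈ firstBlockBounds U c) (hq : q ∈ firstBlockBounds U c) {A A' : Finset (Finset α)}
    (hA : A ∈ ncPartitions (U \ {x ∈ U | p.1 ≤ x ∧ x ≤ p.2}) (U.numAbove p.2) n)
    (hA' : A' ∈ ncPartitions (U \ {x ∈ U | q.1 ≤ x ∧ x ≤ q.2}) (U.numAbove q.2) n)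
    (h : insert {x ∈ U | p.1 ≤ x ∧ x ≤ p.2} A =
      insert {x ∈ U | q.1 ≤ x ∧ x ≤ q.2} A') :
    p = q ∧ A = A' := by
  obtain ⟨hp₁, hp₂, hp, -⟩ := mem_firstBlockBounds.1 hp
  obtain ⟨hq₁, hq₂, hq, -⟩ := mem_firstBlockBounds.1 hq
  set I := {x ∈ U | p.1 ≤ x ∧ x ≤ p.2}
  set J := {x ∈ U | q.1 ≤ x ∧ x ≤ q.2}
  have hIJ : I = J := by
    by_contra hne
    have hJA : J ∈ A := (mem_insert.1 (h ▸ mem_insert_self J A')).resolve_left (Ne.symm hne)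
    have hIA' : I ∈ A' := (mem_insert.1 (h ▸ mem_insert_self I A)).resolve_left hne
    obtain ⟨y, hyJ, hpy⟩ := exists_lt_of_mem_ncPartitions_sdiff hA hJA
    obtain ⟨z, hzI, hqz⟩ := exists_lt_of_mem_ncPartitions_sdiff hA' hIA'
    exact (hpy.trans_le (mem_filter.1 hyJ).2.2).not_gt (hqz.trans_le (mem_filter.1 hzI).2.2)
  have hpI : p.1 ∈ J ∧ p.2 ∈ J :=
    hIJ ▸ ⟨mem_filter.2 ⟨hp₁, le_rfl, hp⟩, mem_filter.2 ⟨hp₂, hp, le_rfl⟩⟩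
  have hqJ : q.1 ∈ I ∧ q.2 ∈ I :=
    hIJ ▸ ⟨mem_filter.2 ⟨hq₁, le_rfl, hq⟩, mem_filter.2 ⟨hq₂, hq, le_rfl⟩⟩
  have hpq : p = q := Prod.ext
    (le_antisymm (mem_filter.1 hqJ.1).2.1 (mem_filter.1 hpI.1).2.1)
    (le_antisymm (mem_filter.1 hpI.2).2.2 (mem_filter.1 hqJ.2).2.2)
  subst hpq
  refine ⟨rfl, ?_⟩
  have hnA := (mem_ncPartitions.1 hA).1.notMem_of_nonempty ⟨p.2, hqJ.2⟩
  have hnA' := (mem_ncPartitions.1 hA').1.notMem_of_nonempty ⟨p.2, hqJ.2⟩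
  rw [← erase_insert hnA, h, erase_insert hnA']

theorem exists_eq_insert_of_mem_ncPartitions {U : Finset α} {c n : ℕ} {A : Finset (Finset α)}
    (hA : A ∈ ncPartitions U c (n + 1)) : ∃ p ∈ firstBlockBounds U c,
      ∃ A' ∈ ncPartitions (U \ {x ∈ U | p.1 ≤ x ∧ x ≤ p.2}) (U.numAbove p.2) n,
        insert {x ∈ U | p.1 ≤ x ∧ x ≤ p.2} A' = A := by
  obtain ⟨hpart, hnc, hbound, hcard⟩ := mem_ncPartitions.1 hA
  obtain ⟨B, hBA, hB, hBI, hfirst⟩ := hpart.exists_closes_first hnc (card_pos.1 (by omega))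
  set a := B.min' hB
  set t := B.max' hB
  obtain ⟨y, hyB, hyc⟩ := hbound B hBA
  refine ⟨(a, t), mem_firstBlockBounds.2 ⟨hpart.2.2.1 B hBA (min'_mem B hB),
    hpart.2.2.1 B hBA (max'_mem B hB), min'_le_max' B hB,
    (numAbove_anti U (le_max' B y hyB)).trans_lt hyc⟩, A.erase B, ?_, ?_⟩
  · dsimp only
    rw [hBI]
    refine mem_ncPartitions.2 ⟨hpart.erase hBA, hnc.mono (erase_subset B A), fun C hC => ?_,
      by rw [card_erase_of_mem hBA, hcard, Nat.add_sub_cancel]⟩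
    obtain ⟨y, hyC, hty⟩ := hfirst C (mem_of_mem_erase hC)
    have hty : t < y := lt_of_le_of_ne hty fun h => disjoint_left.1
      (hpart.2.1 B hBA C (mem_of_mem_erase hC) (ne_of_mem_erase hC).symm) (max'_mem B hB)
      (by rwa [← h] at hyC)
    have hyU := hpart.2.2.1 C (mem_of_mem_erase hC) hyC
    exact ⟨y, hyC, (hBI ▸ (numAbove_sdiff_lt_iff hyU).2 hty :)⟩
  · dsimp only
    rw [hBI, insert_erase hBA]

theorem card_ncPartitions_succ (U : Finset α) (c n : ℕ) :
    #(ncPartitions U c (n + 1)) = ∑ p ∈ firstBlockBounds U c,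
      #(ncPartitions (U \ {x ∈ U | p.1 ≤ x ∧ x ≤ p.2}) (U.numAbove p.2) n) := by
  rw [← card_sigma]
  symm
  refine card_bij (fun x _ => insert {y ∈ U | x.1.1 ≤ y ∧ y ≤ x.1.2} x.2)
    (fun x hx => insert_mem_ncPartitions (mem_sigma.1 hx).1 (mem_sigma.1 hx).2)
    (fun x hx x' hx' h => ?_) (fun A hA => ?_)
  · obtain ⟨hpp', hAA'⟩ := insert_inj_of_mem_ncPartitions (mem_sigma.1 hx).1
      (mem_sigma.1 hx').1 (mem_sigma.1 hx).2 (mem_sigma.1 hx').2 h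
    exact Sigma.ext hpp' (heq_of_eq hAA')
  · obtain ⟨p, hp, A', hA', rfl⟩ := exists_eq_insert_of_mem_ncPartitions hA
    exact ⟨⟨p, A'⟩, mem_sigma.2 ⟨hp, hA'⟩, rfl⟩

end Counting

theorem card_sdiff_filter_le_le {α : Type*} [LinearOrder α] {U : Finset α} {a t : α}
    (h : a ≤ t) : #(U \ {x ∈ U | a ≤ x ∧ x ≤ t}) = U.numBelow a + U.numAbove t := by
  rw [numBelow, numAbove, ← card_union_of_disjoint
    (disjoint_filter.2 fun x _ hxa htx => (hxa.trans_le h).not_gt htx)]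
  congr 1
  ext x
  simp only [mem_sdiff, mem_filter, mem_union, not_and_or, not_le]
  tauto

theorem bijOn_firstBlockBounds {α : Type*} [LinearOrder α] (U : Finset α) (c : ℕ) :
    Set.BijOn (fun p : α × α => (#(U \ {x ∈ U | p.1 ≤ x ∧ x ≤ p.2}), U.numAbove p.2))
      (firstBlockBounds U c) (topPairs #U c) := by
  refine ⟨fun p hp => ?_, fun p hp p' hp' h => ?_, fun q hq => ?_⟩
  · obtain ⟨-, ht, hat, htc⟩ := mem_firstBlockBounds.1 hp
    have := numBelow_add_numAbove ht
    have := numBelow_mono U hat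
    rw [mem_coe, mem_topPairs]
    dsimp only
    rw [card_sdiff_filter_le_le hat]
    omega
  · obtain ⟨ha, ht, hat, -⟩ := mem_firstBlockBounds.1 hp
    obtain ⟨ha', ht', hat', -⟩ := mem_firstBlockBounds.1 hp'
    simp only [Prod.mk.injEq, card_sdiff_filter_le_le hat, card_sdiff_filter_le_le hat'] at h
    exact Prod.ext (injOn_numBelow U ha ha' (by omega)) (injOn_numAbove U ht ht' h.2)
  · obtain ⟨hi, hj, hji⟩ := mem_topPairs.1 hq
    obtain ⟨t, ht, htj⟩ := exists_numBelow_eq (s := U) (k := #U - 1 - q.2) (by omega)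
    obtain ⟨a, ha, hai⟩ := exists_numBelow_eq (s := U) (k := q.1 - q.2) (by omega)
    have hsum := numBelow_add_numAbove ht
    have hat : a ≤ t := le_of_not_gt fun hta => by
      have := numBelow_lt_numBelow ht hta
      omega
    refine ⟨(a, t), mem_firstBlockBounds.2 ⟨ha, ht, hat, show U.numAbove t < c by omega⟩,
      ?_⟩
    dsimp only
    rw [card_sdiff_filter_le_le hat]
    exact Prod.ext (by dsimp only; omega) (by dsimp only; omega)

theorem card_ncPartitions_eq_card_ncCodes {α : Type*} [LinearOrder α] (U : Finset α)
    (c n : ℕ) :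
    #(ncPartitions U c n) = #(ncCodes #U c n) := by
  induction n generalizing U c with
  | zero => simp only [card_ncPartitions_zero, card_ncCodes_zero, card_eq_zero]
  | succ n ih =>
    rw [card_ncPartitions_succ, card_ncCodes_succ]
    have h := bijOn_firstBlockBounds U c
    exact sum_nbij _ (fun p hp => h.mapsTo hp) h.injOn h.surjOn fun p _ => ih _ _

theorem card_ncCodes_self {m n : ℕ} (hm : 1 ≤ m) (hn : 1 ≤ n) :
    #(ncCodes m m n) = #(ballotPairs ((range m).erase 0) (n - 1)) := by
  have zero_mem : ∀ {p}, p ∈ ncCodes m m n → 0 ∈ p.1 ∧ 0 ∈ p.2 := fun hp => by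
    obtain ⟨-, -, -, -, hb, h0⟩ := mem_ncCodes.1 hp
    exact ⟨h0 (by omega), hb.zero_mem (h0 (by omega))⟩
  refine card_nbij' (fun p => (p.1.erase 0, p.2.erase 0)) (fun p => (insert 0 p.1, insert 0 p.2))
    (fun p hp => ?_) (fun p hp => ?_) (fun p hp => ?_) (fun p hp => ?_)
  · obtain ⟨h₁, h₂⟩ := zero_mem hp
    obtain ⟨hS, hT, cS, cT, hb, -⟩ := mem_ncCodes.1 hp
    refine mem_ballotPairs.2 ⟨⟨erase_subset_erase 0 hS, by rw [card_erase_of_mem h₁, cS]⟩,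
      ⟨erase_subset_erase 0 hT, by rw [card_erase_of_mem h₂, cT]⟩, ?_⟩
    rwa [← ballot_insert_zero_iff (notMem_erase 0 _) (notMem_erase 0 _), insert_erase h₁,
      insert_erase h₂]
  · obtain ⟨⟨hS, cS⟩, ⟨hT, cT⟩, hb⟩ := mem_ballotPairs.1 hp
    have h₁ : 0 ∉ p.1 := fun h => (mem_erase.1 (hS h)).1 rfl
    have h₂ : 0 ∉ p.2 := fun h => (mem_erase.1 (hT h)).1 rfl
    refine mem_ncCodes.2 ⟨insert_subset (mem_range.2 hm) (hS.trans (erase_subset 0 _)),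
      insert_subset (mem_range.2 hm) (hT.trans (erase_subset 0 _)), ?_, ?_,
      (ballot_insert_zero_iff h₁ h₂).2 hb, fun _ => mem_insert_self 0 _⟩
    · rw [card_insert_of_notMem h₁, cS, Nat.sub_add_cancel hn]
    · rw [card_insert_of_notMem h₂, cT, Nat.sub_add_cancel hn]
  · obtain ⟨h₁, h₂⟩ := zero_mem hp
    exact Prod.ext (insert_erase h₁) (insert_erase h₂)
  · obtain ⟨⟨hS, -⟩, ⟨hT, -⟩, -⟩ := mem_ballotPairs.1 hp
    exact Prod.ext (erase_insert fun h => (mem_erase.1 (hS h)).1 rfl)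
      (erase_insert fun h => (mem_erase.1 (hT h)).1 rfl)

theorem card_noncrossing_fin (m n : ℕ) :
    Nat.card {A : Finset (Finset (Fin m)) //
        IsPartitionOfFin m A ∧ IsNoncrossing m A ∧ A.card = n} =
      #(ncPartitions (univ : Finset (Fin m)) m n) := by
  classical
  rw [Nat.card_eq_fintype_card, Fintype.card_subtype]
  congr 1
  ext A
  rw [mem_filter, mem_ncPartitions]
  have hpart : IsPartitionOfFin m A ↔ IsSetPartition univ A := by
    simp [IsPartitionOfFin, IsSetPartition]
  have hbound : IsPartitionOfFin m A →
      ∀ B ∈ A, ∃ x ∈ B, (univ : Finset (Fin m)).numAbove x < m :=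
    fun h B hB => by
      obtain ⟨x, hx⟩ := h.1 B hB
      have := numBelow_add_numAbove (mem_univ x)
      rw [card_univ, Fintype.card_fin] at this
      exact ⟨x, hx, by omega⟩
  constructor
  · rintro ⟨-, hp, hnc, hc⟩
    exact ⟨hpart.1 hp, hnc, hbound hp, hc⟩
  · rintro ⟨hp, hnc, -, hc⟩
    exact ⟨mem_univ A, hpart.2 hp, hnc, hc⟩

theorem noncrossing_partitions_card_general (m n : ℕ) (hm : 1 ≤ m) (hn : 1 ≤ n) :
    (Nat.card {A : Finset (Finset (Fin m)) //
        IsPartitionOfFin m A ∧ IsNoncrossing m A ∧ A.card = n} : ℚ) =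
      (m.choose n * m.choose (n - 1) : ℚ) / m := by
  have hG : #((range m).erase 0) + 1 = m := by
    rw [card_erase_of_mem (mem_range.2 hm), card_range, Nat.sub_add_cancel hm]
  have key := succ_mul_card_ballotPairs ((range m).erase 0) (n - 1)
  rw [hG, Nat.sub_add_cancel hn] at key
  rw [card_noncrossing_fin, card_ncPartitions_eq_card_ncCodes, card_univ, Fintype.card_fin,
    card_ncCodes_self hm hn, eq_div_iff (by positivity), mul_comm]
  exact_mod_cast key

/-- the number of non-crossing partitions of `m` cyclically ordered
points into exactly `n` blocks equals the Narayana number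
`N_{m,n} = (1/m) C(m,n) C(m,n−1)`. -/
theorem noncrossing_partitions_card (m n : ℕ) (hm : 1 ≤ m) (hn : 1 ≤ n) (hnm : n ≤ m) :
    (Nat.card {A : Finset (Finset (Fin m)) //
        IsPartitionOfFin m A ∧ IsNoncrossing m A ∧ A.card = n} : ℚ) =
      (m.choose n * m.choose (n - 1) : ℚ) / m :=
  noncrossing_partitions_card_general m n hm hn
end
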